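/- arXiv:math/0612151 — 5 statements merged into one kernel-verified Lean document; each statement's English description precedes it below -/
import Mathlib

section
/- Let A be a nondegenerate Hermitian n×n matrix, p_α ∈ ℂⁿ, x₀ ∈ ℝ with x₀ ≠ 0, and let w ∈ ℂⁿ∖{0} and a ∈ ℂ with |a| < 1 satisfy conj(w)ᵀAw = x₀(1−|a|²). Suppose (w',a') ∈ ℂⁿ × ℂ satisfies the three conditions: (i) (conj(w')ᵀAw + conj(w)ᵀAw')/(1−|a|²) + x₀(conj(a)a' + a·conj(a'))/(1−|a|²) = 0; (ii) Im[ conj(p_α)ᵀAw'/(1−a) + conj(p_α)ᵀAw·a'/(1−a)² + x₀·a'/(1−a)² ] = 0; (iii) w'/(1−a) + w·a'/(1−a)² = 0. Then w' = 0 and a' = 0. (This is the injectivity of the differential of the evaluation map ψ : h ↦ (Im h₀(1), h_α(1)) on stationary discs centered at p, which shows that h ↦ h(1) is a local diffeomorphism when p ∉ Q.) -/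
open Complex Metric Matrix

noncomputable section

/-- injectivity of the differential of the evaluation map
`ψ : h ↦ (Im h₀(1), h_α(1))` on stationary discs centered at `p = (p₀, 0)`:
if `(w', a')` satisfies the three linearized equations (i), (ii), (iii) at a point
`(w, a)` of the constraint manifold `conj(w)ᵀAw = x₀(1−|a|²)` with `x₀ ≠ 0`,
then `w' = 0` and `a' = 0`. -/
theorem stmt7 {n : ℕ} (hn : 1 ≤ n) (A : Matrix (Fin n) (Fin n) ℂ)
    (hA : A.IsHermitian) (hAdet : A.det ≠ 0)
    (pα : Fin n → ℂ) (x₀ : ℝ) (hx₀ : x₀ ≠ 0)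
    (w : Fin n → ℂ) (hw : w ≠ 0) (a : ℂ) (ha : ‖a‖ < 1)
    (hconstraint : star w ⬝ᵥ A.mulVec w = ((x₀ * (1 - ‖a‖ ^ 2) : ℝ) : ℂ))
    (w' : Fin n → ℂ) (a' : ℂ)
    (h1 : (star w' ⬝ᵥ A.mulVec w + star w ⬝ᵥ A.mulVec w')
            / ((1 - ‖a‖ ^ 2 : ℝ) : ℂ)
          + (x₀ : ℂ) * ((starRingEnd ℂ a) * a' + a * (starRingEnd ℂ a'))
            / ((1 - ‖a‖ ^ 2 : ℝ) : ℂ) = 0)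
    (h2 : ((star pα ⬝ᵥ A.mulVec w') / (1 - a)
          + (star pα ⬝ᵥ A.mulVec w) * a' / (1 - a) ^ 2
          + (x₀ : ℂ) * a' / (1 - a) ^ 2).im = 0)
    (h3 : ∀ j, w' j / (1 - a) + w j * a' / (1 - a) ^ 2 = 0) :
    w' = 0 ∧ a' = 0 := by
  have hd : (1 : ℂ) - a ≠ 0 := sub_ne_zero.mpr (by
    intro h
    rw [← h] at ha
    simp at ha)
  have hd' : (1 : ℂ) - starRingEnd ℂ a ≠ 0 := sub_ne_zero.mpr (by
    intro h
    rw [← Complex.norm_conj a, ← h] at ha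
    simp at ha)
  have hx : (x₀ : ℂ) ≠ 0 := Complex.ofReal_ne_zero.mpr hx₀
  have hrpos : (0 : ℝ) < 1 - ‖a‖ ^ 2 := by
    nlinarith [norm_nonneg a]
  have hr : (1 - ‖a‖ ^ 2 : ℝ) ≠ 0 := ne_of_gt hrpos
  have hrC0 : ((1 - ‖a‖ ^ 2 : ℝ) : ℂ) ≠ 0 := Complex.ofReal_ne_zero.mpr hr
  have hrC : ((1 - ‖a‖ ^ 2 : ℝ) : ℂ) = 1 - a * starRingEnd ℂ a := by
    rw [Complex.mul_conj]
    push_cast [Complex.normSq_eq_norm_sq]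
    ring
  set c := a' / (1 - a) with hc
  have ha' : a' = c * (1 - a) := by
    rw [hc]; field_simp
  have ha'c : starRingEnd ℂ a' = starRingEnd ℂ c * (1 - starRingEnd ℂ a) := by
    have := congrArg (starRingEnd ℂ) ha'
    simpa using this
  have hw'eq : w' = -(c • w) := by
    funext j
    have h := h3 j
    rw [ha'] at h
    field_simp at h
    simp only [Pi.neg_apply, Pi.smul_apply, smul_eq_mul]
    have h4 : (w' j + c * w j) * (1 - a) ^ 2 = 0 := by linear_combination (1 - a) ^ 2 * h
    rcases mul_eq_zero.mp h4 with h5 | h5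
    · linear_combination h5
    · exact absurd ((pow_eq_zero_iff (by norm_num)).mp h5) hd
  set T := star w ⬝ᵥ A.mulVec w with hT
  set S := star pα ⬝ᵥ A.mulVec w with hS
  have hD1 : star w' ⬝ᵥ A.mulVec w = -(starRingEnd ℂ c * T) := by
    rw [hw'eq]
    simp [star_smul, smul_dotProduct, smul_eq_mul, Complex.star_def, hT]
  have hD2 : star w ⬝ᵥ A.mulVec w' = -(c * T) := by
    rw [hw'eq]
    simp [Matrix.mulVec_smul, dotProduct_smul, smul_eq_mul, hT, Matrix.mulVec_neg]
  have hS' : star pα ⬝ᵥ A.mulVec w' = -(c * S) := by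
    rw [hw'eq]
    simp [Matrix.mulVec_smul, dotProduct_smul, smul_eq_mul, hS, Matrix.mulVec_neg]
  -- Equation (E1) from h1
  rw [hD1, hD2, hconstraint, ← add_div] at h1
  have h1' := (div_eq_zero_iff.mp h1).resolve_right hrC0
  have hE1 : (x₀ : ℂ) * (c + starRingEnd ℂ c)
      = (x₀ : ℂ) * (c * starRingEnd ℂ a + starRingEnd ℂ c * a) := by
    rw [show ((x₀ * (1 - ‖a‖ ^ 2) : ℝ) : ℂ)
        = (x₀ : ℂ) * (1 - a * starRingEnd ℂ a) from by
      rw [show ((x₀ * (1 - ‖a‖ ^ 2) : ℝ) : ℂ)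
          = (x₀ : ℂ) * ((1 - ‖a‖ ^ 2 : ℝ) : ℂ) from by push_cast; ring, hrC],
      ha'c, ha'] at h1'
    linear_combination -h1'
  have hE1' : c + starRingEnd ℂ c = c * starRingEnd ℂ a + starRingEnd ℂ c * a :=
    mul_left_cancel₀ hx hE1
  -- Equation (E2) from h2
  have hkey : (star pα ⬝ᵥ A.mulVec w') / (1 - a)
      + (star pα ⬝ᵥ A.mulVec w) * a' / (1 - a) ^ 2
      + (x₀ : ℂ) * a' / (1 - a) ^ 2 = (x₀ : ℂ) * (c / (1 - a)) := by
    rw [hS', ha', ← hS]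
    field_simp
    ring
  rw [hkey] at h2
  have him : (c / (1 - a)).im = 0 := by
    simp [Complex.mul_im] at h2
    rcases h2 with h2 | h2
    · exact absurd h2 hx₀
    · exact h2
  have hreal : starRingEnd ℂ (c / (1 - a)) = c / (1 - a) :=
    Complex.conj_eq_iff_im.mpr him
  have hE2 : starRingEnd ℂ c * (1 - a) = c * (1 - starRingEnd ℂ a) := by
    rw [map_div₀, map_sub, _root_.map_one] at hreal
    exact (div_eq_div_iff hd' hd).mp hreal
  have hc0 : starRingEnd ℂ c * (1 - a) = 0 := by
    linear_combination (1/2 : ℂ) * hE1' + (1/2 : ℂ) * hE2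
  have hczero : c = 0 := by
    rcases mul_eq_zero.mp hc0 with h | h
    · have := congrArg (starRingEnd ℂ) h
      simpa using this
    · exact absurd h hd
  refine ⟨?_, ?_⟩
  · rw [hw'eq, hczero]
    simp
  · rw [ha', hczero, zero_mul]
end
end

section
/- Let A be a Hermitian n×n matrix, w ∈ ℂⁿ∖{0} and a ∈ Δ with conj(w)ᵀAw ≠ 0. Then the ℝ-linear map sending (w',a') ∈ ℂⁿ × ℂ to ( 2a·(conj(w')ᵀAw + conj(w)ᵀAw')/(1−|a|²) + 2·conj(w)ᵀAw·(a' + a²·conj(a'))/(1−|a|²)² , w' ) is injective. (This is the injectivity of the differential of Ψ at every point, so that h ↦ h'(0) is a local diffeomorphism on stationary discs centered at p.) -/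
open Complex Metric Matrix

noncomputable section

/-- the (ℝ-linear) differential of `Ψ(w,a) = (2a·conj(w)ᵀAw/(1−|a|²), w)` at a
point `(w, a)` with `w ≠ 0`, `|a| < 1` and `conj(w)ᵀAw ≠ 0`, namely
`(w',a') ↦ ( 2a(conj(w')ᵀAw + conj(w)ᵀAw')/(1−|a|²)
            + 2·conj(w)ᵀAw·(a' + a²·conj(a'))/(1−|a|²)² , w' )`, is injective. -/
theorem stmt9 {n : ℕ} (hn : 1 ≤ n) (A : Matrix (Fin n) (Fin n) ℂ) (hA : A.IsHermitian)
    (w : Fin n → ℂ) (hw : w ≠ 0) (a : ℂ) (ha : ‖a‖ < 1)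
    (hQ : star w ⬝ᵥ A.mulVec w ≠ 0) :
    Function.Injective (fun p : (Fin n → ℂ) × ℂ =>
      ((2 * a * (star p.1 ⬝ᵥ A.mulVec w + star w ⬝ᵥ A.mulVec p.1)
            / ((1 - ‖a‖ ^ 2 : ℝ) : ℂ)
          + 2 * (star w ⬝ᵥ A.mulVec w) * (p.2 + a ^ 2 * (starRingEnd ℂ p.2))
            / (((1 - ‖a‖ ^ 2 : ℝ) : ℂ)) ^ 2,
        p.1) : ℂ × (Fin n → ℂ))) := by
  have hD : ((1 - ‖a‖ ^ 2 : ℝ) : ℂ) ≠ 0 := by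
    have : (0:ℝ) < 1 - ‖a‖ ^ 2 := by nlinarith [norm_nonneg a]
    exact_mod_cast this.ne'
  intro p q h
  have h2 : p.1 = q.1 := congrArg Prod.snd h
  have h1 := congrArg Prod.fst h
  simp only [h2] at h1
  have h1' := add_left_cancel h1
  have h1'' : 2 * (star w ⬝ᵥ A.mulVec w) * (p.2 + a ^ 2 * (starRingEnd ℂ p.2))
      = 2 * (star w ⬝ᵥ A.mulVec w) * (q.2 + a ^ 2 * (starRingEnd ℂ q.2)) := by
    have hD2 : (((1 - ‖a‖ ^ 2 : ℝ) : ℂ)) ^ 2 ≠ 0 := pow_ne_zero _ hD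
    have := congrArg (fun z : ℂ => z * (((1 - ‖a‖ ^ 2 : ℝ) : ℂ)) ^ 2) h1'
    simp only [div_mul_cancel₀ _ hD2] at this
    exact this
  have h3 : p.2 + a ^ 2 * (starRingEnd ℂ p.2) = q.2 + a ^ 2 * (starRingEnd ℂ q.2) :=
    mul_left_cancel₀ (mul_ne_zero two_ne_zero hQ) h1''
  set d := p.2 - q.2 with hd
  have h4 : d = - (a ^ 2 * starRingEnd ℂ d) := by
    simp only [hd, map_sub]
    ring_nf
    linear_combination h3
  have h5 : ‖d‖ = ‖a‖ ^ 2 * ‖d‖ := by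
    calc ‖d‖ = ‖(- (a ^ 2 * starRingEnd ℂ d))‖ := by rw [← h4]
    _ = ‖a‖ ^ 2 * ‖d‖ := by
        rw [norm_neg, norm_mul, norm_pow,
          Complex.norm_conj]
  have h6 : d = 0 := by
    by_contra hne
    have hdp : 0 < ‖d‖ := norm_pos_iff.mpr hne
    have hlt : ‖a‖ ^ 2 < 1 := by nlinarith [norm_nonneg a]
    nlinarith [mul_lt_mul_of_pos_right hlt hdp]
  have : p.2 = q.2 := by
    have := sub_eq_zero.mp h6
    exact this
  exact Prod.ext h2 this
end
end

section
/- Let p = (p₀, 0, …, 0) ∈ ℂ^{n+1} satisfy Condition ∗: p ∉ Q (equivalently Re p₀ ≠ 0), and Re p₀ > 0 if A is positive definite, Re p₀ < 0 if A is negative definite. Then for z ∈ Q, there exists a nonconstant stationary disc h glued to Q with h(0) = p and h(1) = z if and only if Re z₀ · Re p₀ > 0. In other words, the image of the evaluation map h ↦ h(1) on nonconstant stationary discs glued to Q centered at p is exactly {z ∈ Q : Re z₀ · Re p₀ > 0}. -/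
open Complex Metric Matrix

noncomputable section

/-- The defining function of the hyperquadric `Q`:
`r(z) = Re z₀ − Re (conj(z_α)ᵀ A z_α)` (the quadratic term is real since `A` is Hermitian). -/
def rfun {n : ℕ} (A : Matrix (Fin n) (Fin n) ℂ) (z : ℂ × (Fin n → ℂ)) : ℝ :=
  z.1.re - (star z.2 ⬝ᵥ A.mulVec z.2).re

/-- A holomorphic disc in `ℂ^{n+1} = ℂ × ℂⁿ`: continuous on the closed unit disc and
holomorphic on the open unit disc. -/
def IsHoloDisc {n : ℕ} (h : ℂ → ℂ × (Fin n → ℂ)) : Prop :=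
  ContinuousOn h (closedBall 0 1) ∧ DifferentiableOn ℂ h (ball 0 1)

/-- The disc is glued to the hyperquadric `Q = {r = 0}`. -/
def GluedTo {n : ℕ} (A : Matrix (Fin n) (Fin n) ℂ) (h : ℂ → ℂ × (Fin n → ℂ)) : Prop :=
  ∀ ζ ∈ sphere (0 : ℂ) 1, rfun A (h ζ) = 0

/-- The disc is nonconstant. -/
def Nonconst {n : ℕ} (h : ℂ → ℂ × (Fin n → ℂ)) : Prop :=
  ∃ ζ₁ ∈ closedBall (0 : ℂ) 1, ∃ ζ₂ ∈ closedBall (0 : ℂ) 1, h ζ₁ ≠ h ζ₂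

/-- The vector `(1/2, −conj(h_α(ζ))ᵀ A)`. -/
def liftVec {n : ℕ} (A : Matrix (Fin n) (Fin n) ℂ) (h : ℂ → ℂ × (Fin n → ℂ)) (ζ : ℂ) :
    ℂ × (Fin n → ℂ) :=
  (1 / 2, -Matrix.vecMul (star ((h ζ).2)) A)

/-- A holomorphic disc `h` glued to `Q` is stationary if there is a continuous nowhere
vanishing real function `c` on the unit circle such that
`ζ ↦ ζ·c(ζ)·(1/2, −conj(h_α(ζ))ᵀA)` extends continuously to the closed disc,
holomorphically on the open disc. -/
def IsStationaryDisc {n : ℕ} (A : Matrix (Fin n) (Fin n) ℂ) (h : ℂ → ℂ × (Fin n → ℂ)) : Prop :=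
  ∃ c : ℂ → ℝ, ContinuousOn c (sphere (0 : ℂ) 1) ∧ (∀ ζ ∈ sphere (0 : ℂ) 1, c ζ ≠ 0) ∧
    ∃ g : ℂ → ℂ × (Fin n → ℂ), ContinuousOn g (closedBall 0 1) ∧
      DifferentiableOn ℂ g (ball 0 1) ∧
      ∀ ζ ∈ sphere (0 : ℂ) 1, g ζ = (ζ * (c ζ : ℂ)) • liftVec A h ζ

/-- The explicit parametrized disc `Φ(y₀, v, w, a)`. -/
def Phi {n : ℕ} (A : Matrix (Fin n) (Fin n) ℂ) (y₀ : ℝ) (v w : Fin n → ℂ) (a : ℂ) :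
    ℂ → ℂ × (Fin n → ℂ) :=
  fun ζ =>
    (star v ⬝ᵥ A.mulVec v + 2 * (star v ⬝ᵥ A.mulVec w) * (ζ / (1 - a * ζ))
        + (star w ⬝ᵥ A.mulVec w) / ((1 - ‖a‖ ^ 2 : ℝ) : ℂ)
          * ((1 + a * ζ) / (1 - a * ζ))
        + Complex.I * (y₀ : ℂ),
      fun j => v j + w j * (ζ / (1 - a * ζ)))


lemma maxmod {f : ℂ → ℂ} (hd : DifferentiableOn ℂ f (ball 0 1))
    (hc : ContinuousOn f (closedBall 0 1)) {C : ℝ}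
    (hb : ∀ ζ ∈ sphere (0:ℂ) 1, ‖f ζ‖ ≤ C) :
    ∀ x ∈ closedBall (0:ℂ) 1, ‖f x‖ ≤ C := by
  intro x hx
  have h1 : closure (ball (0:ℂ) 1) = closedBall 0 1 := closure_ball _ one_ne_zero
  have h2 : frontier (ball (0:ℂ) 1) = sphere 0 1 := frontier_ball _ one_ne_zero
  exact Complex.norm_le_of_forall_mem_frontier_norm_le isBounded_ball
    ⟨hd, by rwa [h1]⟩ (by rwa [h2]) (by rwa [h1])

lemma im_zero_of_boundary {φ : ℂ → ℂ} (hd : DifferentiableOn ℂ φ (ball 0 1))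
    (hc : ContinuousOn φ (closedBall 0 1)) (hr : ∀ ζ ∈ sphere (0:ℂ) 1, (φ ζ).im = 0) :
    ∀ x ∈ closedBall (0:ℂ) 1, (φ x).im = 0 := by
  intro x hx
  have key : ∀ s : ℂ, s = Complex.I ∨ s = -Complex.I →
      ∀ x ∈ closedBall (0:ℂ) 1, ‖Complex.exp (s * φ x)‖ ≤ 1 := by
    intro s hs
    refine maxmod ?_ ?_ ?_
    · exact (hd.const_mul s).cexp
    · exact Complex.continuous_exp.comp_continuousOn (continuousOn_const.mul hc)
    · intro ζ hζ
      have h0 := hr ζ hζ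
      rcases hs with rfl | rfl <;>
        simp [Complex.norm_exp, h0, Complex.mul_re]
  have h1 := key Complex.I (Or.inl rfl) x hx
  have h2 := key (-Complex.I) (Or.inr rfl) x hx
  rw [Complex.norm_exp] at h1 h2
  have e1 : (Complex.I * φ x).re = -(φ x).im := by simp [Complex.mul_re]
  have e2 : (-Complex.I * φ x).re = (φ x).im := by simp [Complex.mul_re]
  rw [e1, Real.exp_le_one_iff] at h1
  rw [e2, Real.exp_le_one_iff] at h2
  linarith

lemma const_of_real_boundary {φ : ℂ → ℂ} (hd : DifferentiableOn ℂ φ (ball 0 1))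
    (hc : ContinuousOn φ (closedBall 0 1)) (hr : ∀ ζ ∈ sphere (0:ℂ) 1, (φ ζ).im = 0) :
    ∀ x ∈ closedBall (0:ℂ) 1, φ x = φ 1 := by
  have him := im_zero_of_boundary hd hc hr
  have hball : ∀ z ∈ ball (0:ℂ) 1, (φ z).im = 0 := fun z hz =>
    him z (ball_subset_closedBall hz)
  rcases (hd.analyticOnNhd isOpen_ball).is_constant_or_isOpen
      (convex_ball (0:ℂ) 1).isPreconnected with ⟨v, hv⟩ | hopen
  · have heq0 : Set.EqOn φ (fun _ => v) (ball 0 1) := fun z hz => hv z hz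
    have heq : Set.EqOn φ (fun _ => v) (closedBall 0 1) :=
      heq0.of_subset_closure hc continuousOn_const ball_subset_closedBall
        (by rw [closure_ball _ one_ne_zero])
    intro x hx
    rw [heq hx, heq (by simp : (1:ℂ) ∈ closedBall 0 1)]
  · exfalso
    have hopen' : IsOpen (φ '' ball 0 1) := hopen _ subset_rfl isOpen_ball
    have hmem : φ 0 ∈ φ '' ball 0 1 := ⟨0, by simp, rfl⟩
    rcases Metric.isOpen_iff.1 hopen' _ hmem with ⟨ε, hε, hb⟩
    have : φ 0 + (ε/2) * Complex.I ∈ ball (φ 0) ε := by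
      simp only [mem_ball, dist_eq_norm]
      rw [add_sub_cancel_left]
      rw [norm_mul]
      simp [abs_of_pos hε]
      linarith
    rcases hb this with ⟨y, hy, hyeq⟩
    have : (φ y).im = 0 := hball y hy
    rw [hyeq] at this
    simp [Complex.add_im, him 0 (by simp [zero_le_one])] at this
    linarith

lemma quad_real {n : ℕ} {A : Matrix (Fin n) (Fin n) ℂ} (hA : A.IsHermitian) (x : Fin n → ℂ) :
    star x ⬝ᵥ A.mulVec x = (((star x ⬝ᵥ A.mulVec x).re : ℝ) : ℂ) := by
  have hc : (starRingEnd ℂ) (star x ⬝ᵥ A.mulVec x) = star x ⬝ᵥ A.mulVec x := by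
    simp only [dotProduct, Matrix.mulVec, map_sum, _root_.map_mul, Pi.star_apply, RCLike.star_def,
      Complex.conj_conj, Finset.mul_sum]
    rw [Finset.sum_comm]
    refine Finset.sum_congr rfl fun i _ => Finset.sum_congr rfl fun j _ => ?_
    have h := hA.apply i j
    rw [RCLike.star_def] at h
    rw [← h]; ring
  exact (Complex.conj_eq_iff_re.mp hc).symm

lemma center_re_ge {f : ℂ → ℂ} (hd : DifferentiableOn ℂ f (ball 0 1))
    (hc : ContinuousOn f (closedBall 0 1)) {m : ℝ}
    (hb : ∀ ζ ∈ sphere (0:ℂ) 1, m ≤ (f ζ).re) : m ≤ (f 0).re := by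
  have key := maxmod (f := fun ζ => Complex.exp (-(f ζ))) (hd.neg.cexp)
    (Complex.continuous_exp.comp_continuousOn hc.neg) (C := Real.exp (-m))
    (fun ζ hζ => by
      simp only [Complex.norm_exp, Complex.neg_re]
      exact Real.exp_le_exp.mpr (by linarith [hb ζ hζ]))
  have h0 := key 0 (by simp [zero_le_one])
  simp only [Complex.norm_exp, Complex.neg_re] at h0
  have := Real.exp_le_exp.mp h0
  linarith

lemma forward {n : ℕ} (A : Matrix (Fin n) (Fin n) ℂ) (hA : A.IsHermitian)
    (p₀ : ℂ) (hp₀ : p₀.re ≠ 0) (h : ℂ → ℂ × (Fin n → ℂ))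
    (hHolo : IsHoloDisc h) (hGlue : GluedTo A h) (hStat : IsStationaryDisc A h)
    (h0 : h 0 = ((p₀, 0) : ℂ × (Fin n → ℂ))) :
    0 < (h 1).1.re * p₀.re := by
  obtain ⟨hcont, hdiff⟩ := hHolo
  obtain ⟨c, hccont, hcne, g, hgcont, hgdiff, hgeq⟩ := hStat
  have h1s : (1:ℂ) ∈ sphere (0:ℂ) 1 := by simp
  have hsub : sphere (0:ℂ) 1 ⊆ closedBall (0:ℂ) 1 := sphere_subset_closedBall
  set u : ℂ → ℝ := fun ζ => (h ζ).1.re with hu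
  set F : ℂ → ℂ := fun ζ => (g ζ).2 ⬝ᵥ (h ζ).2 with hFdef
  have hFdiff : DifferentiableOn ℂ F (ball 0 1) := by
    apply DifferentiableOn.fun_sum
    intro j _
    exact (differentiableOn_pi.mp hgdiff.snd j).mul (differentiableOn_pi.mp hdiff.snd j)
  have hFcont : ContinuousOn F (closedBall 0 1) := by
    apply continuousOn_finset_sum
    intro j _
    exact (continuousOn_pi.mp hgcont.snd j).mul (continuousOn_pi.mp hcont.snd j)
  have hF0 : F 0 = 0 := by
    simp only [hFdef, h0]
    exact dotProduct_zero _
  -- boundary value of F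
  have hFbd : ∀ ζ ∈ sphere (0:ℂ) 1, F ζ = ζ * (((-(c ζ) * u ζ : ℝ)) : ℂ) := by
    intro ζ hζ
    have h2 : (g ζ).2 = (ζ * (c ζ:ℂ)) • (-(Matrix.vecMul (star ((h ζ).2)) A)) :=
      congrArg Prod.snd (hgeq ζ hζ)
    have hq : Matrix.vecMul (star ((h ζ).2)) A ⬝ᵥ (h ζ).2
        = star ((h ζ).2) ⬝ᵥ A.mulVec (h ζ).2 := (Matrix.dotProduct_mulVec _ _ _).symm
    have hglue := hGlue ζ hζ
    unfold rfun at hglue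
    have hquad : star ((h ζ).2) ⬝ᵥ A.mulVec (h ζ).2 = ((u ζ : ℝ) : ℂ) := by
      rw [quad_real hA]
      congr 1
      simp only [hu]
      linarith
    calc F ζ = ((ζ * (c ζ:ℂ)) • (-(Matrix.vecMul (star ((h ζ).2)) A))) ⬝ᵥ (h ζ).2 := by
          simp only [hFdef]; rw [h2]
      _ = (ζ * (c ζ:ℂ)) * (-(Matrix.vecMul (star ((h ζ).2)) A ⬝ᵥ (h ζ).2)) := by
          rw [smul_dotProduct, neg_dotProduct, smul_eq_mul]
      _ = (ζ * (c ζ:ℂ)) * (-(((u ζ : ℝ)) : ℂ)) := by rw [hq, hquad]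
      _ = ζ * (((-(c ζ) * u ζ : ℝ)) : ℂ) := by push_cast; ring
  -- φ = dslope F 0
  set φ : ℂ → ℂ := dslope F 0 with hφdef
  have h0ball : (0:ℂ) ∈ ball (0:ℂ) 1 := by simp
  have hφdiff : DifferentiableOn ℂ φ (ball 0 1) :=
    (Complex.differentiableOn_dslope (isOpen_ball.mem_nhds h0ball)).mpr hFdiff
  have hφval : ∀ ζ : ℂ, ζ ≠ 0 → φ ζ = ζ⁻¹ * F ζ := by
    intro ζ hζ
    rw [hφdef, dslope_of_ne _ hζ, slope_def_field, hF0]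
    field_simp
    ring
  have hφcont : ContinuousOn φ (closedBall 0 1) := by
    intro x hx
    rcases eq_or_ne x 0 with rfl | hx0
    · exact (continuousAt_dslope_same.2
        (hFdiff.differentiableAt (isOpen_ball.mem_nhds h0ball))).continuousWithinAt
    · have hcw : ContinuousWithinAt (fun ζ => ζ⁻¹ * F ζ) (closedBall 0 1) x :=
        ((continuousAt_inv₀ hx0).continuousWithinAt).mul (hFcont x hx)
      apply hcw.congr_of_eventuallyEq
      · filter_upwards [eventually_nhdsWithin_of_eventually_nhds (eventually_ne_nhds hx0)]
          with ζ hζ using hφval ζ hζ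
      · exact hφval x hx0
  have hφbd : ∀ ζ ∈ sphere (0:ℂ) 1, φ ζ = (((-(c ζ) * u ζ : ℝ)) : ℂ) := by
    intro ζ hζ
    have hζ0 : ζ ≠ 0 := by
      intro hh
      rw [hh] at hζ
      simp at hζ
    rw [hφval ζ hζ0, hFbd ζ hζ]
    field_simp
  have hφ1 : ∀ x ∈ closedBall (0:ℂ) 1, φ x = φ 1 :=
    const_of_real_boundary hφdiff hφcont
      (fun ζ hζ => by rw [hφbd ζ hζ]; exact Complex.ofReal_im _)
  set κ : ℝ := c 1 * u 1 with hκdef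
  have hkey : ∀ ζ ∈ sphere (0:ℂ) 1, c ζ * u ζ = κ := by
    intro ζ hζ
    have e : ((((-(c ζ) * u ζ : ℝ))) : ℂ) = (((-(c 1) * u 1 : ℝ)) : ℂ) := by
      rw [← hφbd ζ hζ, ← hφbd 1 h1s, hφ1 ζ (hsub hζ)]
    have := Complex.ofReal_inj.mp e
    linarith [this]
  -- h₀-components regularity
  have hf1diff : DifferentiableOn ℂ (fun ζ => (h ζ).1) (ball 0 1) := hdiff.fst
  have hf1cont : ContinuousOn (fun ζ => (h ζ).1) (closedBall 0 1) := hcont.fst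
  have hu0 : u 0 = p₀.re := by rw [hu]; simp [h0]
  -- κ ≠ 0
  have hκ : κ ≠ 0 := by
    intro hκ0
    have huz : ∀ ζ ∈ sphere (0:ℂ) 1, u ζ = 0 := by
      intro ζ hζ
      have := hkey ζ hζ
      rw [hκ0] at this
      rcases mul_eq_zero.mp this with hc0 | hu0'
      · exact absurd hc0 (hcne ζ hζ)
      · exact hu0'
    have hge : (0:ℝ) ≤ u 0 := center_re_ge hf1diff hf1cont
      (fun ζ hζ => (huz ζ hζ).ge)
    have hle : (0:ℝ) ≤ -(u 0) := by
      have := center_re_ge (f := fun ζ => -(h ζ).1) hf1diff.neg hf1cont.neg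
        (m := 0) (fun ζ hζ => by
          have h' := huz ζ hζ
          simp only [hu] at h'
          simp only [Complex.neg_re]
          linarith)
      simp only [Complex.neg_re] at this
      have h'' : u 0 = (h 0).1.re := rfl
      linarith
    apply hp₀
    rw [← hu0]
    linarith
  -- sign of c is constant
  have hcsign : ∀ ζ ∈ sphere (0:ℂ) 1, 0 < c ζ * c 1 := by
    intro ζ hζ
    rcases lt_trichotomy (c ζ * c 1) 0 with hlt | heq | hgt
    · exfalso
      have hconn : IsPreconnected (c '' sphere (0:ℂ) 1) := by
        have : (1:Cardinal) < Module.rank ℝ ℂ := by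
          rw [Complex.rank_real_complex]; norm_num
        exact ((isConnected_sphere this 0 zero_le_one).isPreconnected).image _ hccont
      have hmemζ : c ζ ∈ c '' sphere (0:ℂ) 1 := ⟨ζ, hζ, rfl⟩
      have hmem1 : c 1 ∈ c '' sphere (0:ℂ) 1 := ⟨1, h1s, rfl⟩
      have hne : c ζ ≠ c 1 := by
        intro hh
        rw [hh] at hlt
        nlinarith [sq_nonneg (c 1)]
      have h0mem : (0:ℝ) ∈ c '' sphere (0:ℂ) 1 := by
        rcases lt_or_gt_of_ne hne with hlt' | hgt'
        · exact hconn.Icc_subset hmemζ hmem1 ⟨by nlinarith, by nlinarith⟩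
        · exact hconn.Icc_subset hmem1 hmemζ ⟨by nlinarith, by nlinarith⟩
      rcases h0mem with ⟨y, hy, hy0⟩
      exact hcne y hy hy0
    · exfalso
      rcases mul_eq_zero.mp heq with hc0 | hc0
      · exact hcne ζ hζ hc0
      · exact hcne 1 h1s hc0
    · exact hgt
  -- sign of u is constant on boundary
  have husign : ∀ ζ ∈ sphere (0:ℂ) 1, 0 < u ζ * u 1 := by
    intro ζ hζ
    have h2' := hkey ζ hζ
    have h1' := hkey 1 h1s
    have hκ2 : 0 < κ * κ := mul_self_pos.mpr hκ
    have hcc := hcsign ζ hζ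
    have hprod : (u ζ * u 1) * (c ζ * c 1) = κ * κ := by
      linear_combination (c 1 * u 1) * h2' + κ * h1'
    nlinarith
  have hu1 : u 1 ≠ 0 := by
    have := husign 1 h1s
    intro hh; rw [hh] at this; simp at this
  set ε : ℝ := if 0 < u 1 then 1 else -1 with hεdef
  have hε2 : ε * ε = 1 := by
    rcases ite_eq_or_eq (0 < u 1) (1:ℝ) (-1) with hh | hh <;> rw [hεdef, hh] <;> norm_num
  have hεu : ∀ ζ ∈ sphere (0:ℂ) 1, 0 < ε * u ζ := by
    intro ζ hζ
    have := husign ζ hζ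
    rcases lt_or_gt_of_ne hu1 with hlt | hgt
    · have hε' : ε = -1 := by rw [hεdef, if_neg (by linarith)]
      rw [hε']; nlinarith
    · have hε' : ε = 1 := by rw [hεdef, if_pos hgt]
      rw [hε']; nlinarith
  -- minimum on the sphere
  obtain ⟨ζm, hζm, hmin'⟩ := (isCompact_sphere (0:ℂ) 1).exists_isMinOn
    ⟨1, h1s⟩ ((continuousOn_const.mul
      (Complex.continuous_re.comp_continuousOn (hcont.mono hsub).fst)) :
        ContinuousOn (fun ζ => ε * u ζ) (sphere (0:ℂ) 1))
  have hmin : ∀ ζ ∈ sphere (0:ℂ) 1, ε * u ζm ≤ ε * u ζ := fun ζ hζ => hmin' hζ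
  set m : ℝ := ε * u ζm with hmdef
  have hmpos : 0 < m := hεu ζm hζm
  -- transfer to the center
  have hcen : m ≤ ε * u 0 := by
    have := center_re_ge (f := fun ζ => (ε : ℂ) * (h ζ).1)
      (hf1diff.const_mul _) (continuousOn_const.mul hf1cont) (m := m)
      (fun ζ hζ => by
        have : ((ε : ℂ) * (h ζ).1).re = ε * u ζ := by
          simp [Complex.mul_re, hu]
        rw [this]; exact hmin ζ hζ)
    have he : ((ε : ℂ) * (h 0).1).re = ε * u 0 := by simp [Complex.mul_re, hu]
    rwa [he] at this
  have hεu1 := hεu 1 h1s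
  have : 0 < (ε * u 1) * (ε * u 0) := mul_pos hεu1 (lt_of_lt_of_le hmpos hcen)
  have hfin : 0 < u 1 * u 0 := by nlinarith
  rw [hu0] at hfin
  exact hfin

lemma backward {n : ℕ} (A : Matrix (Fin n) (Fin n) ℂ) (hA : A.IsHermitian)
    (p₀ : ℂ) (z : ℂ × (Fin n → ℂ)) (hz : rfun A z = 0) (hzp : 0 < z.1.re * p₀.re) :
    ∃ h : ℂ → ℂ × (Fin n → ℂ), IsHoloDisc h ∧ GluedTo A h ∧ IsStationaryDisc A h ∧
      Nonconst h ∧ h 0 = ((p₀, 0) : ℂ × (Fin n → ℂ)) ∧ h 1 = z := by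
  have hp0 : p₀.re ≠ 0 := fun hh => by rw [hh] at hzp; simp at hzp
  have hz1 : z.1.re ≠ 0 := fun hh => by rw [hh] at hzp; simp at hzp
  set τ : ℂ := (z.1 - (p₀.im : ℂ) * Complex.I) / ((p₀.re : ℝ) : ℂ) with hτdef
  have hτre : τ.re = z.1.re / p₀.re := by
    rw [hτdef, Complex.div_ofReal_re]
    congr 1
    simp [Complex.sub_re, Complex.mul_re]
  have hτrepos : 0 < τ.re := by
    rw [hτre]
    have he : z.1.re / p₀.re = (z.1.re * p₀.re) / (p₀.re ^ 2) := by
      field_simp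
    rw [he]
    positivity
  have hτ1 : τ + 1 ≠ 0 := by
    intro hh
    have h2 : (τ + 1).re = 0 := by rw [hh]; simp
    simp only [Complex.add_re, Complex.one_re] at h2
    linarith
  set a : ℂ := (τ - 1) / (τ + 1) with hadef
  have ha1 : a * (τ + 1) = τ - 1 := by rw [hadef]; field_simp
  have h1a : (1 - a) * (τ + 1) = 2 := by rw [hadef]; field_simp; ring
  have h2a : (1 + a) * (τ + 1) = 2 * τ := by linear_combination ha1
  set N : ℝ := Complex.normSq (τ + 1) with hNdef
  have hN : 0 < N := Complex.normSq_pos.mpr hτ1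
  have e1 : Complex.normSq (1 - a) * N = 4 := by
    have h3 := congrArg Complex.normSq h1a
    rw [_root_.map_mul] at h3
    rw [hNdef, h3]
    norm_num [Complex.normSq_apply]
  have e2 : Complex.normSq a * N = Complex.normSq (τ - 1) := by
    have h3 := congrArg Complex.normSq ha1
    rwa [_root_.map_mul] at h3
  have e3 : N - Complex.normSq (τ - 1) = 4 * τ.re := by
    simp only [hNdef, Complex.normSq_apply, Complex.add_re, Complex.add_im,
      Complex.sub_re, Complex.sub_im, Complex.one_re, Complex.one_im]
    ring
  have e4 : τ.re * p₀.re = z.1.re := by rw [hτre]; field_simp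
  have hkey : Complex.normSq (1 - a) * z.1.re = p₀.re * (1 - Complex.normSq a) := by
    have hgoalN : (Complex.normSq (1 - a) * z.1.re) * N
        = (p₀.re * (1 - Complex.normSq a)) * N := by
      linear_combination z.1.re * e1 + p₀.re * e2 - p₀.re * e3 - 4 * e4
    exact mul_right_cancel₀ (ne_of_gt hN) hgoalN
  have hnsa : Complex.normSq a < 1 := by
    have h3 : Complex.normSq a * N = N - 4 * τ.re := by linarith [e2, e3]
    nlinarith [hN, hτrepos]
  have habs : ‖a‖ < 1 := by
    have h3 : ‖a‖ ^ 2 < 1 := by rw [Complex.sq_norm]; exact hnsa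
    nlinarith [norm_nonneg a]
  have hden : ∀ ζ : ℂ, ‖ζ‖ ≤ 1 → 1 - a * ζ ≠ 0 := by
    intro ζ hζ hh
    have h1 : a * ζ = 1 := by linear_combination -hh
    have h2 : ‖a * ζ‖ = 1 := by rw [h1]; simp
    rw [norm_mul] at h2
    nlinarith [norm_nonneg ζ, norm_nonneg a]
  have h1ane : (1:ℂ) - a ≠ 0 := by
    have := hden 1 (by simp)
    simpa using this
  have hτa : (1 + a) / (1 - a) = τ := by
    have h3 : (1 + a) / (1 - a) = (2 * τ) / 2 := by
      rw [← h2a, ← h1a, mul_div_mul_right _ _ hτ1]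
    rw [h3]
    ring_nf
  set w : Fin n → ℂ := fun j => (1 - a) * z.2 j with hwdef
  have hw2 : w = (1 - a) • z.2 := by funext j; simp [hwdef]
  have hSzz : star z.2 ⬝ᵥ A.mulVec z.2 = ((z.1.re : ℝ) : ℂ) := by
    rw [quad_real hA]
    norm_cast
    unfold rfun at hz
    linarith
  have hSww : star w ⬝ᵥ A.mulVec w = ((Complex.normSq (1 - a) * z.1.re : ℝ) : ℂ) := by
    rw [hw2, star_smul, Matrix.mulVec_smul, smul_dotProduct, dotProduct_smul, hSzz]
    simp only [smul_eq_mul, RCLike.star_def]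
    have h3 : (starRingEnd ℂ) (1-a) * ((1-a) * ((z.1.re:ℝ):ℂ))
        = ((1-a) * (starRingEnd ℂ) (1-a)) * ((z.1.re:ℝ):ℂ) := by ring
    rw [h3, Complex.mul_conj]
    push_cast
    ring
  -- the disc
  set h : ℂ → ℂ × (Fin n → ℂ) := fun ζ =>
    (((p₀.re : ℝ) : ℂ) * ((1 + a*ζ)/(1 - a*ζ)) + Complex.I * ((p₀.im:ℝ):ℂ),
      fun j => w j * (ζ / (1 - a*ζ))) with hhdef
  have habs_cb : ∀ ζ ∈ closedBall (0:ℂ) 1, ‖ζ‖ ≤ 1 := by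
    intro ζ hζ
    simpa using mem_closedBall_zero_iff.mp hζ
  have habs_sp : ∀ ζ ∈ sphere (0:ℂ) 1, ‖ζ‖ = 1 := by
    intro ζ hζ
    simpa using mem_sphere_zero_iff_norm.mp hζ
  have hdenb : ∀ ζ ∈ closedBall (0:ℂ) 1, 1 - a*ζ ≠ 0 := fun ζ hζ => hden ζ (habs_cb ζ hζ)
  have hdenball : ∀ ζ ∈ ball (0:ℂ) 1, 1 - a*ζ ≠ 0 := fun ζ hζ =>
    hdenb ζ (ball_subset_closedBall hζ)
  -- holomorphic disc
  have hHolo : IsHoloDisc h := by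
    constructor
    · apply ContinuousOn.prodMk
      · apply ContinuousOn.add
        · exact continuousOn_const.mul (ContinuousOn.div (by fun_prop) (by fun_prop) hdenb)
        · exact continuousOn_const
      · refine continuousOn_pi.mpr fun j => ?_
        exact continuousOn_const.mul (ContinuousOn.div continuousOn_id (by fun_prop) hdenb)
    · apply DifferentiableOn.prodMk
      · apply DifferentiableOn.add
        · exact (differentiableOn_const _).mul
            (DifferentiableOn.div (by fun_prop) (by fun_prop) hdenball)
        · exact differentiableOn_const _
      · refine differentiableOn_pi.mpr fun j => ?_
        exact (differentiableOn_const _).mul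
          (DifferentiableOn.div differentiableOn_id (by fun_prop) hdenball)
  -- endpoint values
  have hh0 : h 0 = ((p₀, 0) : ℂ × (Fin n → ℂ)) := by
    rw [hhdef]
    refine Prod.ext ?_ ?_
    · show ((p₀.re : ℝ) : ℂ) * ((1 + a*0)/(1 - a*0)) + Complex.I * ((p₀.im:ℝ):ℂ) = p₀
      simp only [mul_zero, add_zero, sub_zero, div_one, mul_one]
      rw [mul_comm Complex.I]
      exact Complex.re_add_im p₀
    · funext j
      show w j * ((0:ℂ) / (1 - a*0)) = 0
      simp
  have hpc : ((p₀.re:ℝ):ℂ) ≠ 0 := Complex.ofReal_ne_zero.mpr hp0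
  have hτmul : τ * ((p₀.re:ℝ):ℂ) = z.1 - (p₀.im:ℂ) * Complex.I := by
    rw [hτdef, div_mul_cancel₀ _ hpc]
  have hh1 : h 1 = z := by
    rw [hhdef]
    refine Prod.ext ?_ ?_
    · show ((p₀.re : ℝ) : ℂ) * ((1 + a*1)/(1 - a*1)) + Complex.I * ((p₀.im:ℝ):ℂ) = z.1
      rw [mul_one, hτa]
      push_cast at hτmul ⊢
      linear_combination hτmul
    · funext j
      show w j * ((1:ℂ) / (1 - a*1)) = z.2 j
      rw [mul_one, hwdef]
      field_simp
  -- glued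
  have hGlue : GluedTo A h := by
    intro ζ hζ
    have hζab := habs_sp ζ hζ
    have hne : 1 - a*ζ ≠ 0 := hden ζ (le_of_eq hζab)
    have hns : Complex.normSq ζ = 1 := by rw [← Complex.sq_norm, hζab]; norm_num
    have hh2 : (h ζ).2 = (ζ / (1 - a*ζ)) • w := by
      funext j
      show w j * (ζ / (1 - a*ζ)) = (ζ / (1 - a*ζ)) * w j
      ring
    have hquad : star (h ζ).2 ⬝ᵥ A.mulVec (h ζ).2
        = ((Complex.normSq (ζ / (1 - a*ζ)) * (Complex.normSq (1-a) * z.1.re) : ℝ) : ℂ) := by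
      rw [hh2, star_smul, Matrix.mulVec_smul, smul_dotProduct, dotProduct_smul, hSww]
      simp only [smul_eq_mul, RCLike.star_def]
      have h3 : (starRingEnd ℂ) (ζ / (1 - a*ζ)) * ((ζ / (1 - a*ζ))
            * ((Complex.normSq (1 - a) * z.1.re : ℝ):ℂ))
          = ((ζ / (1 - a*ζ)) * (starRingEnd ℂ) (ζ / (1 - a*ζ)))
            * ((Complex.normSq (1 - a) * z.1.re : ℝ):ℂ) := by ring
      rw [h3, Complex.mul_conj]
      push_cast
      ring
    unfold rfun
    rw [hquad]
    have hre1 : (h ζ).1.re = p₀.re * ((1 + a*ζ)/(1 - a*ζ)).re := by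
      rw [hhdef]
      simp [Complex.add_re, Complex.re_ofReal_mul, Complex.mul_re]
    have hD : Complex.normSq (1 - a*ζ) ≠ 0 := (Complex.normSq_pos.mpr hne).ne'
    have hX : ((1 + a*ζ)/(1 - a*ζ)).re
        = (1 - Complex.normSq a) / Complex.normSq (1 - a*ζ) := by
      rw [Complex.div_re, ← add_div]
      congr 1
      simp only [Complex.normSq_apply, Complex.add_re, Complex.add_im, Complex.sub_re,
        Complex.sub_im, Complex.mul_re, Complex.mul_im, Complex.one_re, Complex.one_im]
      have hns' : ζ.re * ζ.re + ζ.im * ζ.im = 1 := by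
        simpa [Complex.normSq_apply] using hns
      linear_combination (-(a.re * a.re + a.im * a.im)) * hns'
    have hμns : Complex.normSq (ζ / (1 - a*ζ)) = 1 / Complex.normSq (1 - a*ζ) := by
      rw [Complex.normSq_div, hns]
    rw [Complex.ofReal_re, hre1, hX, hμns]
    field_simp
    linear_combination -hkey
  -- nonconstant
  have hz2ne : z.2 ≠ 0 := by
    intro hh
    apply hz1
    have h3 : star z.2 ⬝ᵥ A.mulVec z.2 = 0 := by rw [hh]; simp
    rw [h3] at hSzz
    exact_mod_cast hSzz.symm
  have hNonconst : Nonconst h := by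
    refine ⟨1, by simp, 0, by simp [zero_le_one], ?_⟩
    rw [hh0, hh1]
    intro hh
    exact hz2ne (congrArg Prod.snd hh)
  -- stationary
  have hStat : IsStationaryDisc A h := by
    refine ⟨fun ζ => Complex.normSq (1 - a*ζ), ?_, ?_, ?_⟩
    · exact (Complex.continuous_normSq.comp (by fun_prop)).continuousOn
    · intro ζ hζ
      exact (Complex.normSq_pos.mpr (hden ζ (le_of_eq (habs_sp ζ hζ)))).ne'
    · refine ⟨fun ζ => ((1 - a*ζ) * (ζ - (starRingEnd ℂ) a) / 2,
        fun j => -((1 - a*ζ) * Matrix.vecMul (star w) A j)), ?_, ?_, ?_⟩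
      · apply ContinuousOn.prodMk
        · fun_prop
        · exact continuousOn_pi.mpr fun j => by fun_prop
      · apply DifferentiableOn.prodMk
        · apply DifferentiableOn.div_const
          exact ((differentiableOn_const _).sub
            ((differentiableOn_const a).mul differentiableOn_id)).mul
            (differentiableOn_id.sub (differentiableOn_const _))
        · refine differentiableOn_pi.mpr fun j => ?_
          exact DifferentiableOn.neg (((differentiableOn_const _).sub
            ((differentiableOn_const a).mul differentiableOn_id)).mul
            (differentiableOn_const _))
      · intro ζ hζ
        have hζab := habs_sp ζ hζ
        have hne : 1 - a*ζ ≠ 0 := hden ζ (le_of_eq hζab)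
        have hns : Complex.normSq ζ = 1 := by rw [← Complex.sq_norm, hζab]; norm_num
        have hζ1 : ζ * (starRingEnd ℂ) ζ = 1 := by
          rw [Complex.mul_conj, hns]
          simp
        have hcne : (starRingEnd ℂ) (1 - a*ζ) ≠ 0 := (map_ne_zero _).mpr hne
        have hcval : ((Complex.normSq (1 - a*ζ) : ℝ) : ℂ)
            = (1 - a*ζ) * (starRingEnd ℂ) (1 - a*ζ) := (Complex.mul_conj _).symm
        simp only [liftVec, Prod.smul_mk, smul_eq_mul]
        refine Prod.ext ?_ ?_
        · show (1 - a*ζ) * (ζ - (starRingEnd ℂ) a) / 2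
            = ζ * ((Complex.normSq (1 - a*ζ) : ℝ) : ℂ) * (1/2)
          rw [hcval]
          simp only [map_sub, _root_.map_one, _root_.map_mul]
          linear_combination ((1 - a*ζ) * ((starRingEnd ℂ) a) / 2) * hζ1
        · show (fun j => -((1 - a*ζ) * Matrix.vecMul (star w) A j))
            = fun j => ζ * ((Complex.normSq (1 - a*ζ) : ℝ) : ℂ) * (-Matrix.vecMul (star (h ζ).2) A j)
          have hstar : star ((h ζ).2) = ((starRingEnd ℂ) (ζ / (1 - a*ζ))) • star w := by
            funext i
            show (starRingEnd ℂ) ((h ζ).2 i) = (starRingEnd ℂ) (ζ / (1 - a*ζ)) * (starRingEnd ℂ) (w i)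
            have : (h ζ).2 i = w i * (ζ / (1 - a*ζ)) := rfl
            rw [this, _root_.map_mul]
            ring
          have hsc : ζ * ((Complex.normSq (1 - a*ζ) : ℝ) : ℂ) * (starRingEnd ℂ) (ζ / (1 - a*ζ))
              = 1 - a*ζ := by
            rw [hcval, map_div₀, ← mul_div_assoc, div_eq_iff hcne]
            linear_combination ((1 - a*ζ) * ((starRingEnd ℂ) (1 - a*ζ))) * hζ1
          funext j
          rw [hstar, Matrix.smul_vecMul]
          show -((1 - a*ζ) * Matrix.vecMul (star w) A j)
            = ζ * ((Complex.normSq (1 - a*ζ) : ℝ) : ℂ)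
              * (-((starRingEnd ℂ) (ζ / (1 - a*ζ)) * Matrix.vecMul (star w) A j))
          linear_combination (Matrix.vecMul (star w) A j) * hsc
  exact ⟨h, hHolo, hGlue, hStat, hNonconst, hh0, hh1⟩

open scoped ComplexOrder

/-- for `p = (p₀, 0)` satisfying Condition ∗ (`Re p₀ ≠ 0`, and `Re p₀ > 0`
if `A` is positive definite, `Re p₀ < 0` if `A` is negative definite), a point `z ∈ Q` is
of the form `h(1)` for a nonconstant stationary disc `h` glued to `Q` with `h(0) = p`
iff `Re z₀ · Re p₀ > 0`. -/
theorem stmt10 {n : ℕ} (hn : 1 ≤ n) (A : Matrix (Fin n) (Fin n) ℂ)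
    (hA : A.IsHermitian) (hAdet : A.det ≠ 0)
    (p₀ : ℂ) (hp₀ : p₀.re ≠ 0)
    (hpos : A.PosDef → 0 < p₀.re) (hneg : (-A).PosDef → p₀.re < 0)
    (z : ℂ × (Fin n → ℂ)) (hz : rfun A z = 0) :
    (∃ h : ℂ → ℂ × (Fin n → ℂ), IsHoloDisc h ∧ GluedTo A h ∧ IsStationaryDisc A h ∧
        Nonconst h ∧ h 0 = ((p₀, 0) : ℂ × (Fin n → ℂ)) ∧ h 1 = z) ↔
      0 < z.1.re * p₀.re := by
  
  constructor
  · rintro ⟨h, hHolo, hGlue, hStat, -, h0, h1⟩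
    have := forward A hA p₀ hp₀ h hHolo hGlue hStat h0
    rwa [h1] at this
  · intro hzp
    exact backward A hA p₀ z hz hzp
end
end

section
/- Let f be a complex-valued function, continuous on the closed unit disc, holomorphic on the open unit disc, and not identically zero, and let κ ∈ ℤ. If f(ζ) = ζ^κ · conj(f(ζ)) for every ζ on the unit circle, then κ ≥ 0. -/
open Complex Metric

/-- An open subset of the real line in `ℂ` is empty. -/
lemma aux_im_open_empty {S : Set ℂ} (hS : IsOpen S) (h : ∀ z ∈ S, z.im = 0) : S = ∅ := by
  by_contra hne
  obtain ⟨z, hz⟩ := Set.nonempty_iff_ne_empty.mpr hne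
  obtain ⟨ε, hε, hball⟩ := Metric.isOpen_iff.mp hS z hz
  have hmem : z + (ε / 2) * I ∈ S := by
    apply hball
    simp only [mem_ball, dist_eq_norm]
    have : z + (ε / 2) * I - z = (ε / 2 : ℂ) * I := by ring
    rw [this, norm_mul, Complex.norm_I, mul_one, norm_div]
    simp only [Complex.norm_real, Complex.norm_ofNat]
    rw [Real.norm_eq_abs, abs_of_pos hε]
    linarith
  have := h _ hmem
  simp [Complex.add_im, Complex.mul_im, Complex.ofReal_im, Complex.ofReal_re] at this
  rw [h z hz] at this
  simp at this
  linarith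

/-- if `f` is continuous on the closed unit disc, holomorphic on the open
unit disc, not identically zero, and satisfies `f(ζ) = ζ^κ · conj(f(ζ))` on the unit
circle for some integer `κ`, then `κ ≥ 0`. -/
theorem stmt13 (f : ℂ → ℂ) (hc : ContinuousOn f (closedBall 0 1))
    (hd : DifferentiableOn ℂ f (ball 0 1))
    (hnz : ¬ ∀ ζ ∈ closedBall (0 : ℂ) 1, f ζ = 0) (κ : ℤ)
    (hrel : ∀ ζ ∈ sphere (0 : ℂ) 1, f ζ = ζ ^ κ * starRingEnd ℂ (f ζ)) :
    0 ≤ κ := by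
  by_contra hneg
  push_neg at hneg
  set n : ℕ := (-κ).toNat with hn
  have hκn : κ = -(n : ℤ) := by
    rw [hn]; omega
  have hn1 : 1 ≤ n := by omega
  set G : ℂ → ℂ := fun ζ => ζ ^ n * (f ζ) ^ 2 with hG
  have hGd : DifferentiableOn ℂ G (ball 0 1) :=
    (differentiable_pow n).differentiableOn.mul (hd.pow 2)
  have hGc : ContinuousOn G (closedBall 0 1) :=
    ((continuous_pow n).continuousOn).mul (hc.pow 2)
  -- boundary values of G are real
  have hGsphere : ∀ ζ ∈ sphere (0 : ℂ) 1, (G ζ).im = 0 := by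
    intro ζ hζ
    have hζ1 : ‖ζ‖ = 1 := by
      simpa [Complex.dist_eq] using hζ
    have hζ0 : ζ ≠ 0 := by
      intro h; rw [h] at hζ1; simp at hζ1
    have h1 : ζ ^ n * f ζ = starRingEnd ℂ (f ζ) := by
      have h2 := hrel ζ hζ
      rw [hκn, zpow_neg, zpow_natCast] at h2
      have hzn : ζ ^ n ≠ 0 := pow_ne_zero _ hζ0
      conv_lhs => rw [h2]
      rw [← mul_assoc, mul_inv_cancel₀ hzn, one_mul]
    have : G ζ = f ζ * starRingEnd ℂ (f ζ) := by
      rw [hG]; dsimp only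
      rw [← h1]; ring
    rw [this, Complex.mul_conj]
    simp
  -- max modulus trick: Im G = 0 on the open ball
  have hmax : ∀ s : ℂ, ∀ z ∈ ball (0 : ℂ) 1,
      ‖Complex.exp (s * G z)‖ ≤ Real.exp (s * G z).re → True := fun _ _ _ _ => trivial
  have closure_b : closure (ball (0 : ℂ) 1) = closedBall 0 1 := closure_ball 0 one_ne_zero
  have frontier_b : frontier (ball (0 : ℂ) 1) = sphere 0 1 := frontier_ball 0 one_ne_zero
  have key : ∀ s : ℂ, (∀ ζ ∈ sphere (0 : ℂ) 1, (s * G ζ).re = 0) →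
      ∀ z ∈ ball (0 : ℂ) 1, (s * G z).re ≤ 0 := by
    intro s hs z hz
    have hdc : DiffContOnCl ℂ (fun ζ => Complex.exp (s * G ζ)) (ball 0 1) := by
      constructor
      · exact ((hGd.const_mul s).cexp)
      · rw [closure_b]
        exact ((hGc.const_smul s).cexp).congr (fun x _ => by simp [smul_eq_mul])
    have hb : ∀ ζ ∈ frontier (ball (0 : ℂ) 1), ‖Complex.exp (s * G ζ)‖ ≤ 1 := by
      intro ζ hζ
      rw [frontier_b] at hζ
      rw [Complex.norm_exp, hs ζ hζ]
      simp
    have hzc : z ∈ closure (ball (0 : ℂ) 1) := subset_closure hz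
    have := Complex.norm_le_of_forall_mem_frontier_norm_le isBounded_ball hdc hb hzc
    rw [Complex.norm_exp] at this
    exact Real.exp_le_one_iff.mp this
  have hre1 : ∀ ζ ∈ sphere (0 : ℂ) 1, ((-I) * G ζ).re = 0 := by
    intro ζ hζ
    have := hGsphere ζ hζ
    simp [Complex.mul_re, this]
  have hre2 : ∀ ζ ∈ sphere (0 : ℂ) 1, (I * G ζ).re = 0 := by
    intro ζ hζ
    have := hGsphere ζ hζ
    simp [Complex.mul_re, this]
  have hIm0 : ∀ z ∈ ball (0 : ℂ) 1, (G z).im = 0 := by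
    intro z hz
    have h1 := key (-I) hre1 z hz
    have h2 := key I hre2 z hz
    simp [Complex.mul_re] at h1 h2
    linarith
  -- open mapping theorem: G is constant on the ball
  have hGa : AnalyticOnNhd ℂ G (ball 0 1) := hGd.analyticOnNhd isOpen_ball
  have hconst : ∀ z ∈ ball (0 : ℂ) 1, G z = G 0 := by
    rcases hGa.is_constant_or_isOpen (convex_ball 0 1).isPreconnected with ⟨w, hw⟩ | hopen
    · intro z hz
      rw [hw z hz, hw 0 (by simp)]
    · exfalso
      have himg : IsOpen (G '' ball 0 1) :=
        hopen _ le_rfl isOpen_ball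
      have hsub : ∀ w ∈ G '' ball (0 : ℂ) 1, w.im = 0 := by
        rintro w ⟨z, hz, rfl⟩
        exact hIm0 z hz
      have := aux_im_open_empty himg hsub
      have h0 : G 0 ∈ G '' ball (0 : ℂ) 1 := ⟨0, by simp, rfl⟩
      rw [this] at h0
      exact h0
  have hG00 : G 0 = 0 := by
    rw [hG]; dsimp only
    rw [zero_pow (by omega : n ≠ 0)]
    ring
  -- f vanishes on the ball
  have hf0' : ∀ z ∈ ball (0 : ℂ) 1, z ≠ 0 → f z = 0 := by
    intro z hz hz0
    have hGz := hconst z hz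
    rw [hG00, hG] at hGz
    dsimp only at hGz
    rcases mul_eq_zero.mp hGz with h | h
    · exact absurd (pow_eq_zero_iff (by omega : n ≠ 0) |>.mp h) hz0
    · exact pow_eq_zero_iff (by norm_num : (2:ℕ) ≠ 0) |>.mp h
  have hf0 : ∀ z ∈ ball (0 : ℂ) 1, f z = 0 := by
    intro z hz
    by_cases hz0 : z = 0
    · subst hz0
      have hcont : ContinuousAt f 0 :=
        (hd.differentiableAt (isOpen_ball.mem_nhds (by simp))).continuousAt
      have ht1 : Filter.Tendsto f (nhdsWithin 0 {(0:ℂ)}ᶜ) (nhds (f 0)) :=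
        hcont.tendsto.mono_left nhdsWithin_le_nhds
      have ht2 : Filter.Tendsto f (nhdsWithin 0 {(0:ℂ)}ᶜ) (nhds 0) := by
        apply Filter.Tendsto.congr' _ tendsto_const_nhds
        have hball : ball (0:ℂ) 1 ∈ nhdsWithin (0:ℂ) {(0:ℂ)}ᶜ :=
          nhdsWithin_le_nhds (isOpen_ball.mem_nhds (by simp))
        filter_upwards [hball, self_mem_nhdsWithin] with x hx hx'
        exact (hf0' x hx hx').symm
      exact tendsto_nhds_unique ht1 ht2
    · exact hf0' z hz hz0
  -- f vanishes on the closed ball, contradiction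
  apply hnz
  intro ζ hζ
  by_cases hζb : ζ ∈ ball (0 : ℂ) 1
  · exact hf0 ζ hζb
  · have hζcl : ζ ∈ closure (ball (0 : ℂ) 1) := by rw [closure_b]; exact hζ
    have hne : (nhdsWithin ζ (ball (0 : ℂ) 1)).NeBot :=
      mem_closure_iff_nhdsWithin_neBot.mp hζcl
    have ht1 : Filter.Tendsto f (nhdsWithin ζ (ball 0 1)) (nhds (f ζ)) := by
      apply (hc.continuousWithinAt hζ).mono_left
      apply nhdsWithin_mono
      exact ball_subset_closedBall
    have ht2 : Filter.Tendsto f (nhdsWithin ζ (ball (0:ℂ) 1)) (nhds 0) := by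
      apply Filter.Tendsto.congr' _ tendsto_const_nhds
      filter_upwards [self_mem_nhdsWithin] with x hx
      exact (hf0 x hx).symm
    exact tendsto_nhds_unique ht1 ht2
end

section
/- Let N ≥ 1, let κ₁, …, κ_N ∈ ℤ, and let B⁺ and B̃⁻ be continuous maps from the closed unit disc to the N×N complex matrices, holomorphic on the open unit disc, whose values are invertible at every point of the closed unit disc. Define B on the unit circle by B(e^{iθ}) = B⁺(e^{iθ}) · diag(e^{iκ₁θ}, …, e^{iκ_Nθ}) · B̃⁻(e^{−iθ}). If the function θ ↦ det B(e^{iθ}) is of class C¹, then the sum κ = κ₁ + ⋯ + κ_N equals the winding number around 0 of the closed curve θ ↦ det B(e^{iθ}), i.e. κ = (1/2πi) ∫_{∂Δ} (det B)'(ζ)/det B(ζ) dζ. -/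
open Complex Metric Matrix intervalIntegral

noncomputable section

namespace Stmt14Aux

open Real Set

/-- Continuity of the determinant of a matrix-valued function from entrywise continuity. -/
lemma detContOn {n : ℕ} {M : ℂ → Matrix (Fin n) (Fin n) ℂ} {s : Set ℂ}
    (h : ∀ i j, ContinuousOn (fun z => M z i j) s) :
    ContinuousOn (fun z => (M z).det) s := by
  have hM : ContinuousOn (fun z => M z) s :=
    continuousOn_pi.2 fun i => continuousOn_pi.2 fun j => h i j
  exact (Continuous.matrix_det continuous_id).comp_continuousOn hM

/-- Differentiability of the determinant of a matrix-valued function from entrywise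
differentiability. -/
lemma detDiffOn {n : ℕ} {M : ℂ → Matrix (Fin n) (Fin n) ℂ} {s : Set ℂ}
    (h : ∀ i j, DifferentiableOn ℂ (fun z => M z i j) s) :
    DifferentiableOn ℂ (fun z => (M z).det) s := by
  simp only [Matrix.det_apply, Units.smul_def, zsmul_eq_mul]
  apply DifferentiableOn.fun_sum
  intro σ _
  exact ((differentiableOn_const _).mul
    (DifferentiableOn.fun_finset_prod (fun i _ => h (σ i) i)))

/-- Two `C¹` nonvanishing loops that stay close have the same winding integral. -/
lemma winding_eq (u v : ℝ → ℂ) (hu : ContDiff ℝ 1 u) (hv : ContDiff ℝ 1 v)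
    (hu0 : ∀ θ, u θ ≠ 0) (hv0 : ∀ θ, v θ ≠ 0)
    (huper : u (2 * π) = u 0) (hvper : v (2 * π) = v 0)
    (hclose : ∀ θ ∈ Set.uIcc (0:ℝ) (2 * π), ‖u θ - v θ‖ < ‖v θ‖) :
    (∫ θ in (0:ℝ)..(2*π), deriv u θ / u θ) = ∫ θ in (0:ℝ)..(2*π), deriv v θ / v θ := by
  have hud : Differentiable ℝ u := hu.differentiable one_ne_zero
  have hvd : Differentiable ℝ v := hv.differentiable one_ne_zero
  set q : ℝ → ℂ := fun θ => u θ / v θ with hqdef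
  have hq0 : ∀ θ, q θ ≠ 0 := fun θ => div_ne_zero (hu0 θ) (hv0 θ)
  have hqd : ∀ θ, HasDerivAt q
      ((deriv u θ * v θ - u θ * deriv v θ) / (v θ) ^ 2) θ := fun θ =>
    ((hud θ).hasDerivAt.div (hvd θ).hasDerivAt (hv0 θ))
  have hslit : ∀ θ ∈ Set.uIcc (0:ℝ) (2*π), q θ ∈ Complex.slitPlane := by
    intro θ hθ
    have h1 : ‖q θ - 1‖ < 1 := by
      have h2 := hclose θ hθ
      have hvpos : (0:ℝ) < ‖v θ‖ := norm_pos_iff.2 (hv0 θ)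
      have h3 : ‖(u θ - v θ) / v θ‖ < 1 := by
        rw [norm_div]
        exact (div_lt_one hvpos).2 h2
      have h4 : (u θ - v θ) / v θ = q θ - 1 := by
        rw [hqdef]
        rw [sub_div, div_self (hv0 θ)]
      rwa [h4] at h3
    rw [Complex.mem_slitPlane_iff]
    left
    have h5 : |(q θ - 1).re| ≤ ‖q θ - 1‖ := Complex.abs_re_le_norm _
    have h6 : |(q θ).re - 1| < 1 := by
      simpa using lt_of_le_of_lt h5 h1
    have := (abs_lt.1 h6).1
    linarith
  set D : ℝ → ℂ := fun θ => deriv u θ / u θ - deriv v θ / v θ with hDdef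
  have hw : ∀ θ ∈ Set.uIcc (0:ℝ) (2*π),
      HasDerivAt (fun t => Complex.log (q t)) (D θ) θ := by
    intro θ hθ
    have := (hqd θ).clog_real (hslit θ hθ)
    convert this using 1
    rw [hDdef, hqdef]
    field_simp [hu0 θ, hv0 θ]
  have hcu : Continuous fun θ => deriv u θ / u θ :=
    (hu.continuous_deriv le_rfl).div hu.continuous hu0
  have hcv : Continuous fun θ => deriv v θ / v θ :=
    (hv.continuous_deriv le_rfl).div hv.continuous hv0
  have hInt : (∫ θ in (0:ℝ)..(2*π), D θ) =
      Complex.log (q (2*π)) - Complex.log (q 0) := by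
    apply intervalIntegral.integral_eq_sub_of_hasDerivAt hw
    exact ((hcu.sub hcv).intervalIntegrable _ _)
  have hq_per : q (2*π) = q 0 := by rw [hqdef]; simp [huper, hvper]
  have hzero : (∫ θ in (0:ℝ)..(2*π), D θ) = 0 := by
    rw [hInt, hq_per, sub_self]
  have hsplit : (∫ θ in (0:ℝ)..(2*π), D θ) =
      (∫ θ in (0:ℝ)..(2*π), deriv u θ / u θ) -
        ∫ θ in (0:ℝ)..(2*π), deriv v θ / v θ := by
    rw [hDdef]
    exact intervalIntegral.integral_sub (hcu.intervalIntegrable _ _)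
      (hcv.intervalIntegrable _ _)
  rw [hsplit] at hzero
  exact sub_eq_zero.1 hzero

end Stmt14Aux

/-- if `B(e^{iθ}) = B⁺(e^{iθ})·diag(e^{iκ₁θ},…,e^{iκ_Nθ})·B̃⁻(e^{−iθ})` is a
Birkhoff factorization (with `B⁺`, `B̃⁻` continuous on the closed unit disc, holomorphic
on the open unit disc and invertible everywhere) and `θ ↦ det B(e^{iθ})` is of class `C¹`,
then the Maslov index `κ = κ₁ + ⋯ + κ_N` is the winding number of `det B` around `0`. -/
theorem stmt14 (N : ℕ) (hN : 1 ≤ N) (κ : Fin N → ℤ)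
    (Bp Bm : ℂ → Matrix (Fin N) (Fin N) ℂ)
    (hBpc : ∀ i j, ContinuousOn (fun ζ => Bp ζ i j) (closedBall 0 1))
    (hBpd : ∀ i j, DifferentiableOn ℂ (fun ζ => Bp ζ i j) (ball 0 1))
    (hBmc : ∀ i j, ContinuousOn (fun ζ => Bm ζ i j) (closedBall 0 1))
    (hBmd : ∀ i j, DifferentiableOn ℂ (fun ζ => Bm ζ i j) (ball 0 1))
    (hBpu : ∀ ζ ∈ closedBall (0 : ℂ) 1, IsUnit (Bp ζ))
    (hBmu : ∀ ζ ∈ closedBall (0 : ℂ) 1, IsUnit (Bm ζ))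
    (g : ℝ → ℂ)
    (hg : ∀ θ : ℝ, g θ =
      (Bp (Complex.exp (θ * Complex.I)) *
        Matrix.diagonal (fun j => Complex.exp ((κ j : ℂ) * θ * Complex.I)) *
        Bm (Complex.exp (-(θ * Complex.I)))).det)
    (hC1 : ContDiff ℝ 1 g) :
    ((∑ j, κ j : ℤ) : ℂ)
      = (2 * Real.pi * Complex.I)⁻¹ * ∫ θ in (0 : ℝ)..(2 * Real.pi), deriv g θ / g θ := by
  have hπ : (0:ℝ) < Real.pi := Real.pi_pos
  have hT0 : (0:ℝ) ≤ 2 * Real.pi := by positivity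
  set fp : ℂ → ℂ := fun z => (Bp z).det with hfpdef
  set fm : ℂ → ℂ := fun z => (Bm z).det with hfmdef
  have hfpc : ContinuousOn fp (closedBall 0 1) := Stmt14Aux.detContOn hBpc
  have hfmc : ContinuousOn fm (closedBall 0 1) := Stmt14Aux.detContOn hBmc
  have hfpd : DifferentiableOn ℂ fp (ball 0 1) := Stmt14Aux.detDiffOn hBpd
  have hfmd : DifferentiableOn ℂ fm (ball 0 1) := Stmt14Aux.detDiffOn hBmd
  have hfp0 : ∀ ζ ∈ closedBall (0:ℂ) 1, fp ζ ≠ 0 := fun ζ hζ =>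
    ((Matrix.isUnit_iff_isUnit_det _).1 (hBpu ζ hζ)).ne_zero
  have hfm0 : ∀ ζ ∈ closedBall (0:ℂ) 1, fm ζ ≠ 0 := fun ζ hζ =>
    ((Matrix.isUnit_iff_isUnit_det _).1 (hBmu ζ hζ)).ne_zero
  set κs : ℂ := ((∑ j, κ j : ℤ) : ℂ) with hκs
  set F : ℝ → ℝ → ℂ := fun ρ θ =>
    Complex.exp (κs * θ * Complex.I) * fp ((ρ:ℂ) * Complex.exp (θ * Complex.I)) *
      fm ((ρ:ℂ) * Complex.exp (-(θ * Complex.I))) with hFdef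
  have hneg : ∀ θ:ℝ, -((θ:ℂ) * Complex.I) = ((-θ:ℝ):ℂ) * Complex.I := by
    intro θ; push_cast; ring
  have habs : ∀ ρ θ : ℝ, ‖(ρ:ℂ) * Complex.exp ((θ:ℂ) * Complex.I)‖ = |ρ| := by
    intro ρ θ
    rw [norm_mul, Complex.norm_real, Real.norm_eq_abs,
      Complex.norm_exp_ofReal_mul_I, mul_one]
  have hmem : ∀ ρ : ℝ, ρ ∈ Set.Icc (0:ℝ) 1 → ∀ θ : ℝ,
      ((ρ:ℂ) * Complex.exp ((θ:ℂ) * Complex.I)) ∈ closedBall (0:ℂ) 1 := by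
    intro ρ hρ θ
    rw [mem_closedBall, dist_zero_right, habs, _root_.abs_of_nonneg hρ.1]
    exact hρ.2
  have hmem2 : ∀ ρ : ℝ, ρ ∈ Set.Icc (0:ℝ) 1 → ∀ θ : ℝ,
      ((ρ:ℂ) * Complex.exp (-((θ:ℂ) * Complex.I))) ∈ closedBall (0:ℂ) 1 := by
    intro ρ hρ θ
    rw [hneg θ]
    exact hmem ρ hρ (-θ)
  have hsum : ∀ θ:ℝ, (∏ j, Complex.exp ((κ j : ℂ) * θ * Complex.I))
      = Complex.exp (κs * θ * Complex.I) := by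
    intro θ
    rw [← Complex.exp_sum]
    congr 1
    rw [hκs, ← Finset.sum_mul, ← Finset.sum_mul]
    push_cast
    ring
  have hgF : g = F 1 := by
    funext θ
    rw [hg θ, Matrix.det_mul, Matrix.det_mul, Matrix.det_diagonal, hsum θ]
    simp only [hFdef, Complex.ofReal_one, one_mul]
    simp only [show ∀ z, (Bp z).det = fp z from fun _ => rfl,
      show ∀ z, (Bm z).det = fm z from fun _ => rfl]
    ring
  have hF0 : ∀ ρ ∈ Set.Icc (0:ℝ) 1, ∀ θ : ℝ, F ρ θ ≠ 0 := by
    intro ρ hρ θ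
    simp only [hFdef]
    exact mul_ne_zero (mul_ne_zero (Complex.exp_ne_zero _) (hfp0 _ (hmem ρ hρ θ)))
      (hfm0 _ (hmem2 ρ hρ θ))
  have hcoe : ContDiff ℝ 1 (fun θ:ℝ => (θ:ℂ)) := Complex.ofRealCLM.contDiff.of_le le_top
  have hcexp1 : ContDiff ℝ 1 (fun θ:ℝ => Complex.exp ((θ:ℂ) * Complex.I)) :=
    (hcoe.mul contDiff_const).cexp
  have hcexp2 : ContDiff ℝ 1 (fun θ:ℝ => Complex.exp (-((θ:ℂ) * Complex.I))) :=
    ((hcoe.mul contDiff_const).neg).cexp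
  have hcexpκ : ContDiff ℝ 1 (fun θ:ℝ => Complex.exp (κs * (θ:ℂ) * Complex.I)) :=
    ((contDiff_const.mul hcoe).mul contDiff_const).cexp
  have hFcd : ∀ ρ ∈ Set.Icc (0:ℝ) 1, ContDiff ℝ 1 (F ρ) := by
    rintro ρ ⟨hρ0, hρ1⟩
    rcases eq_or_lt_of_le hρ1 with h1 | h1
    · rw [h1, ← hgF]
      exact hC1
    · have hball1 : ∀ θ:ℝ, ((ρ:ℂ) * Complex.exp ((θ:ℂ) * Complex.I)) ∈ ball (0:ℂ) 1 := by
        intro θ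
        rw [mem_ball, dist_zero_right, habs, _root_.abs_of_nonneg hρ0]
        exact h1
      have hball2 : ∀ θ:ℝ, ((ρ:ℂ) * Complex.exp (-((θ:ℂ) * Complex.I))) ∈ ball (0:ℂ) 1 := by
        intro θ
        rw [hneg θ]
        exact hball1 (-θ)
      have hfpCD : ContDiffOn ℝ 1 fp (ball 0 1) :=
        ((hfpd.analyticOnNhd isOpen_ball).contDiffOn isOpen_ball.uniqueDiffOn).restrict_scalars ℝ
      have hfmCD : ContDiffOn ℝ 1 fm (ball 0 1) :=
        ((hfmd.analyticOnNhd isOpen_ball).contDiffOn isOpen_ball.uniqueDiffOn).restrict_scalars ℝ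
      have hc1 : ContDiff ℝ 1 (fun θ:ℝ => (ρ:ℂ) * Complex.exp ((θ:ℂ) * Complex.I)) :=
        contDiff_const.mul hcexp1
      have hc2 : ContDiff ℝ 1 (fun θ:ℝ => (ρ:ℂ) * Complex.exp (-((θ:ℂ) * Complex.I))) :=
        contDiff_const.mul hcexp2
      have hfp1 : ContDiff ℝ 1 (fun θ:ℝ => fp ((ρ:ℂ) * Complex.exp ((θ:ℂ) * Complex.I))) := by
        rw [← contDiffOn_univ]
        exact hfpCD.comp hc1.contDiffOn (fun θ _ => hball1 θ)
      have hfm1 : ContDiff ℝ 1 (fun θ:ℝ => fm ((ρ:ℂ) * Complex.exp (-((θ:ℂ) * Complex.I)))) := by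
        rw [← contDiffOn_univ]
        exact hfmCD.comp hc2.contDiffOn (fun θ _ => hball2 θ)
      exact (hcexpκ.mul hfp1).mul hfm1
  have hEper : Complex.exp (((2*Real.pi:ℝ):ℂ) * Complex.I) = 1 := by
    push_cast
    exact Complex.exp_two_pi_mul_I
  have hEper' : Complex.exp (-(((2*Real.pi:ℝ):ℂ) * Complex.I)) = 1 := by
    push_cast
    rw [show -(2*(Real.pi:ℂ)*Complex.I) = ((-1:ℤ):ℂ) * (2*Real.pi*Complex.I) by push_cast; ring]
    exact Complex.exp_int_mul_two_pi_mul_I (-1)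
  have hEκ : Complex.exp (κs * ((2*Real.pi:ℝ):ℂ) * Complex.I) = 1 := by
    rw [hκs]
    rw [show ((∑ j, κ j : ℤ):ℂ) * ((2*Real.pi:ℝ):ℂ) * Complex.I
        = ((∑ j, κ j : ℤ):ℂ) * (2*Real.pi*Complex.I) by push_cast; ring]
    exact Complex.exp_int_mul_two_pi_mul_I _
  have hFper : ∀ ρ:ℝ, F ρ (2*Real.pi) = F ρ 0 := by
    intro ρ
    simp only [hFdef, hEκ, hEper, hEper', Complex.ofReal_zero, zero_mul, mul_zero, neg_zero,
      Complex.exp_zero, mul_one, one_mul]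
  set K : Set (ℝ × ℝ) := Set.Icc (0:ℝ) 1 ×ˢ Set.Icc (0:ℝ) (2*Real.pi) with hKdef
  have hKc : IsCompact K := isCompact_Icc.prod isCompact_Icc
  set Ψ : ℝ × ℝ → ℂ := fun p => F p.1 p.2 with hΨdef
  have hΨc : ContinuousOn Ψ K := by
    simp only [hΨdef, hFdef]
    apply ContinuousOn.mul
    apply ContinuousOn.mul
    · exact (Continuous.cexp (by
        exact (continuous_const.mul (Complex.continuous_ofReal.comp continuous_snd)).mul
          continuous_const)).continuousOn
    · apply hfpc.comp
      · exact ((Complex.continuous_ofReal.comp continuous_fst).mul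
          (Continuous.cexp ((Complex.continuous_ofReal.comp continuous_snd).mul
            continuous_const))).continuousOn
      · intro p hp
        exact hmem p.1 hp.1 p.2
    · apply hfmc.comp
      · exact ((Complex.continuous_ofReal.comp continuous_fst).mul
          (Continuous.cexp (((Complex.continuous_ofReal.comp continuous_snd).mul
            continuous_const).neg))).continuousOn
      · intro p hp
        exact hmem2 p.1 hp.1 p.2
  have hKne : K.Nonempty := ⟨(0,0), ⟨⟨le_rfl, zero_le_one⟩, ⟨le_rfl, hT0⟩⟩⟩
  obtain ⟨p₀, hp₀K, hp₀⟩ := hKc.exists_isMinOn hKne hΨc.norm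
  set ε : ℝ := ‖Ψ p₀‖ with hεdef
  have hεpos : 0 < ε := norm_pos_iff.2 (hF0 p₀.1 hp₀K.1 p₀.2)
  obtain ⟨δ, hδpos, hδ⟩ :=
    Metric.uniformContinuousOn_iff.1 (hKc.uniformContinuousOn_of_continuous hΨc) ε hεpos
  set W : ℝ → ℂ := fun ρ => ∫ θ in (0:ℝ)..(2*Real.pi), deriv (F ρ) θ / F ρ θ with hW
  have hstep : ∀ ρ ∈ Set.Icc (0:ℝ) 1, ∀ ρ' ∈ Set.Icc (0:ℝ) 1, |ρ - ρ'| < δ → W ρ = W ρ' := by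
    intro ρ hρ ρ' hρ' hd
    apply Stmt14Aux.winding_eq (F ρ) (F ρ') (hFcd ρ hρ) (hFcd ρ' hρ') (hF0 ρ hρ) (hF0 ρ' hρ')
      (hFper ρ) (hFper ρ')
    intro θ hθ
    rw [Set.uIcc_of_le hT0] at hθ
    have h1 : (ρ, θ) ∈ K := ⟨hρ, hθ⟩
    have h2 : (ρ', θ) ∈ K := ⟨hρ', hθ⟩
    have h3 : dist (ρ, θ) (ρ', θ) < δ := by
      rw [Prod.dist_eq]
      simpa [Real.dist_eq] using hd
    have h4 : dist (Ψ (ρ, θ)) (Ψ (ρ', θ)) < ε := hδ _ h1 _ h2 h3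
    have h5 : ε ≤ ‖Ψ (ρ', θ)‖ := hp₀ h2
    have h6 : ‖F ρ θ - F ρ' θ‖ < ε := by
      rw [← dist_eq_norm]
      exact h4
    exact lt_of_lt_of_le h6 h5
  have hind : ∀ n : ℕ, ∀ ρ ∈ Set.Icc (0:ℝ) 1, ρ ≤ n * (δ/2) → W ρ = W 0 := by
    intro n
    induction n with
    | zero =>
      intro ρ hρ h
      have : ρ = 0 := le_antisymm (by simpa using h) hρ.1
      rw [this]
    | succ n ih =>
      intro ρ hρ h
      by_cases hc : ρ ≤ n * (δ/2)
      · exact ih ρ hρ hc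
      · push_neg at hc
        have hρ'mem : max (ρ - δ/2) 0 ∈ Set.Icc (0:ℝ) 1 :=
          ⟨le_max_right _ _, max_le (by linarith [hρ.2]) zero_le_one⟩
        have hρ'le : max (ρ - δ/2) 0 ≤ n * (δ/2) := by
          apply max_le
          · push_cast at h
            linarith
          · positivity
        have hdist : |ρ - max (ρ - δ/2) 0| < δ := by
          have h1 : max (ρ - δ/2) 0 ≤ ρ := max_le (by linarith) hρ.1
          have h2 : ρ - δ/2 ≤ max (ρ - δ/2) 0 := le_max_left _ _
          rw [_root_.abs_of_nonneg (by linarith : (0:ℝ) ≤ ρ - max (ρ - δ/2) 0)]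
          linarith
        exact (hstep ρ hρ _ hρ'mem hdist).trans (ih _ hρ'mem hρ'le)
  obtain ⟨n, hn⟩ := exists_nat_ge (2/δ)
  have h1n : (1:ℝ) ≤ n * (δ/2) := by
    have h2 : 2/δ * (δ/2) ≤ n * (δ/2) :=
      mul_le_mul_of_nonneg_right hn (by positivity)
    calc (1:ℝ) = 2/δ * (δ/2) := by field_simp
    _ ≤ n * (δ/2) := h2
  have hW1 : W 1 = W 0 := hind n 1 ⟨zero_le_one, le_rfl⟩ h1n
  have hF0eq : F 0 = fun θ:ℝ => Complex.exp (κs * (θ:ℂ) * Complex.I) * (fp 0 * fm 0) := by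
    funext θ
    simp only [hFdef, Complex.ofReal_zero, zero_mul]
    ring
  have hc00 : fp 0 * fm 0 ≠ 0 :=
    mul_ne_zero (hfp0 0 (mem_closedBall_self zero_le_one)) (hfm0 0 (mem_closedBall_self zero_le_one))
  have hder0 : ∀ θ:ℝ, HasDerivAt (F 0) ((κs * Complex.I) * F 0 θ) θ := by
    intro θ
    rw [hF0eq]
    have h1 : HasDerivAt (fun t:ℝ => κs * (t:ℂ) * Complex.I) (κs * Complex.I) θ := by
      have h2 : HasDerivAt (fun t:ℝ => t • (κs * Complex.I)) (κs * Complex.I) θ := by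
        simpa using (hasDerivAt_id θ).smul_const (κs * Complex.I)
      convert h2 using 2 with t
      rw [Complex.real_smul]
      ring
    have h3 := (h1.cexp).mul_const (fp 0 * fm 0)
    convert h3 using 1
    · rfl
    · beta_reduce
      ring
  have hW0 : W 0 = ((2*Real.pi:ℝ):ℂ) * (κs * Complex.I) := by
    have hcongr : Set.EqOn (fun θ:ℝ => deriv (F 0) θ / F 0 θ) (fun _ => κs * Complex.I)
        (Set.uIcc (0:ℝ) (2*Real.pi)) := by
      intro θ _
      have hne : F 0 θ ≠ 0 := hF0 0 ⟨le_rfl, zero_le_one⟩ θ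
      show deriv (F 0) θ / F 0 θ = κs * Complex.I
      rw [(hder0 θ).deriv]
      field_simp
    show (∫ θ in (0:ℝ)..(2*Real.pi), deriv (F 0) θ / F 0 θ) = ((2*Real.pi:ℝ):ℂ) * (κs * Complex.I)
    rw [intervalIntegral.integral_congr hcongr, intervalIntegral.integral_const, sub_zero,
      Complex.real_smul]
  have hgint : (∫ θ in (0:ℝ)..(2*Real.pi), deriv g θ / g θ) = W 1 := by
    rw [hW, hgF]
  rw [hgint, hW1, hW0]
  have hIne : (2 * (Real.pi:ℂ) * Complex.I) ≠ 0 := by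
    apply mul_ne_zero (mul_ne_zero two_ne_zero _) Complex.I_ne_zero
    exact Complex.ofReal_ne_zero.2 Real.pi_ne_zero
  have hrw : ((2*Real.pi:ℝ):ℂ) * (κs * Complex.I) = κs * (2 * (Real.pi:ℂ) * Complex.I) := by
    push_cast
    ring
  rw [hrw, mul_comm κs, ← mul_assoc, inv_mul_cancel₀ hIne, one_mul]
end
end
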